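/- arXiv:1306.0445 — 9 statements merged into one kernel-verified Lean document; each statement's English description precedes it below -/
import Mathlib

section
/- For every complex number λ with |λ| < 1 and every z ∈ ℂ with |z| = 1, the modulus of the complex derivative of τ_λ at z equals 2·(1 − Re(conj(λ)·z))/(1 − 2·Re(conj(λ)·z) + |λ|²), and this quantity is strictly greater than 1. In particular τ_λ is an expanding circle map: inf_{|z|=1} |τ_λ'(z)| > 1. -/
/-!
On the unit circle `conj z = z⁻¹`, so the numerator `λ - 2z + conj λ · z²` of `τ_λ'(z)` equals
`z · (2 Re(conj λ · z) - 2)`, while the denominator is `|1 - conj λ · z|²`; this gives the formula.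
As a function of `r = Re(conj λ · z) ∈ [-|λ|, |λ|]` the quotient `2(1 - r)/(1 - 2r + |λ|²)` is
increasing (its derivative has the sign of `1 - |λ|²`), so it is bounded below by its value
`2/(1 + |λ|)` at `r = -|λ|`, which is `> 1` uniformly on the circle.
-/

open ComplexConjugate

noncomputable def circleTau (lam : ℂ) : ℂ → ℂ :=
  fun w => w * (lam - w) / (1 - conj lam * w)

theorem hasDerivAt_circleTau {lam z : ℂ} (hz : 1 - conj lam * z ≠ 0) :
    HasDerivAt (circleTau lam) ((lam - 2 * z + conj lam * z ^ 2) / (1 - conj lam * z) ^ 2) z := by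
  have hnum : HasDerivAt (fun w : ℂ => w * (lam - w)) (lam - 2 * z) z :=
    ((hasDerivAt_id' z).mul ((hasDerivAt_id' z).const_sub lam)).congr_deriv (by ring)
  have hden : HasDerivAt (fun w : ℂ => 1 - conj lam * w) (-conj lam) z :=
    ((hasDerivAt_const z 1).sub ((hasDerivAt_id' z).const_mul (conj lam))).congr_deriv (by ring)
  exact (hnum.div hden hz).congr_deriv (by ring)

section UnitCircle

variable {lam z : ℂ}

theorem norm_conj_mul_of_norm_eq_one (hz : ‖z‖ = 1) : ‖conj lam * z‖ = ‖lam‖ := by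
  rw [norm_mul, hz, mul_one, Complex.norm_conj]

theorem one_sub_conj_mul_ne_zero (hlam : ‖lam‖ < 1) (hz : ‖z‖ = 1) : 1 - conj lam * z ≠ 0 := by
  intro h
  rw [← norm_conj_mul_of_norm_eq_one hz, ← sub_eq_zero.mp h, norm_one] at hlam
  exact hlam.false

theorem circleTau_deriv_numerator_eq (hz : ‖z‖ = 1) :
    lam - 2 * z + conj lam * z ^ 2 = z * ((2 * (conj lam * z).re : ℝ) - 2) := by
  have hzz : z * conj z = 1 := by
    rw [Complex.mul_conj, Complex.normSq_eq_norm_sq, hz]; norm_num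
  have hre : conj lam * z + lam * conj z = (2 * (conj lam * z).re : ℝ) := by
    simpa using Complex.add_conj (conj lam * z)
  rw [← hre]
  linear_combination -lam * hzz

theorem norm_one_sub_conj_mul_sq (hz : ‖z‖ = 1) :
    ‖1 - conj lam * z‖ ^ 2 = 1 - 2 * (conj lam * z).re + ‖lam‖ ^ 2 := by
  rw [← norm_conj_mul_of_norm_eq_one (lam := lam) hz, Complex.sq_norm, Complex.sq_norm,
    Complex.normSq_sub, Complex.normSq_one, one_mul, Complex.conj_re]
  ring

theorem norm_deriv_circleTau (hlam : ‖lam‖ < 1) (hz : ‖z‖ = 1) :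
    ‖deriv (circleTau lam) z‖ =
      2 * (1 - (conj lam * z).re) / (1 - 2 * (conj lam * z).re + ‖lam‖ ^ 2) := by
  have hre : (conj lam * z).re < 1 :=
    (Complex.re_le_norm _).trans_lt ((norm_conj_mul_of_norm_eq_one hz).trans_lt hlam)
  have hnum : ‖z * ((2 * (conj lam * z).re : ℝ) - 2)‖ = 2 * (1 - (conj lam * z).re) := by
    rw [norm_mul, hz, one_mul, ← Complex.ofReal_ofNat, ← Complex.ofReal_sub, Complex.norm_real,
      Real.norm_of_nonpos (by linarith)]
    ring
  rw [(hasDerivAt_circleTau (one_sub_conj_mul_ne_zero hlam hz)).deriv,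
    circleTau_deriv_numerator_eq hz, norm_div, hnum, norm_pow, norm_one_sub_conj_mul_sq hz]

theorem abs_re_conj_mul_le (hz : ‖z‖ = 1) : |(conj lam * z).re| ≤ ‖lam‖ :=
  (Complex.abs_re_le_norm _).trans (norm_conj_mul_of_norm_eq_one hz).le

end UnitCircle

theorem two_div_one_add_le_of_abs_le {a r : ℝ} (ha : a < 1) (hr : |r| ≤ a) :
    2 / (1 + a) ≤ 2 * (1 - r) / (1 - 2 * r + a ^ 2) := by
  obtain ⟨hlo, hhi⟩ := abs_le.mp hr
  have hden : 0 < 1 - 2 * r + a ^ 2 := by nlinarith [sq_nonneg (1 - a)]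
  rw [div_le_div_iff₀ (by linarith) hden]
  nlinarith [mul_nonneg (neg_le_iff_add_nonneg.mp hlo) (sub_nonneg.mpr ha.le)]

/-- For λ ∈ ℂ with |λ| < 1 and z on the unit circle, the modulus of the derivative of
τ_λ(w) = w·(λ − w)/(1 − conj(λ)·w) at z equals
2·(1 − Re(conj(λ)·z))/(1 − 2·Re(conj(λ)·z) + |λ|²) and is strictly greater than 1;
in particular the infimum of |τ_λ'| over the unit circle is strictly greater than 1. -/
theorem circle_map_expanding (lam : ℂ) (hlam : ‖lam‖ < 1) :
    (∀ z : ℂ, ‖z‖ = 1 →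
      ‖deriv (fun w : ℂ => w * (lam - w) / (1 - (starRingEnd ℂ) lam * w)) z‖ =
        2 * (1 - ((starRingEnd ℂ) lam * z).re) /
          (1 - 2 * ((starRingEnd ℂ) lam * z).re + ‖lam‖ ^ 2) ∧
      1 < 2 * (1 - ((starRingEnd ℂ) lam * z).re) /
          (1 - 2 * ((starRingEnd ℂ) lam * z).re + ‖lam‖ ^ 2)) ∧
    1 < ⨅ z : Metric.sphere (0 : ℂ) 1,
        ‖deriv (fun w : ℂ => w * (lam - w) / (1 - (starRingEnd ℂ) lam * w)) (z : ℂ)‖ := by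
  have hbound : 1 < 2 / (1 + ‖lam‖) := by
    rw [lt_div_iff₀ (by positivity)]
    linarith
  have hlower {z : ℂ} (hz : ‖z‖ = 1) :
      2 / (1 + ‖lam‖) ≤ 2 * (1 - (conj lam * z).re) / (1 - 2 * (conj lam * z).re + ‖lam‖ ^ 2) :=
    two_div_one_add_le_of_abs_le hlam (abs_re_conj_mul_le hz)
  refine ⟨fun z hz => ⟨norm_deriv_circleTau hlam hz, hbound.trans_le (hlower hz)⟩, ?_⟩
  have : Nonempty (Metric.sphere (0 : ℂ) 1) := ⟨⟨1, by simp⟩⟩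
  refine hbound.trans_le (le_ciInf fun z => ?_)
  have hz : ‖(z : ℂ)‖ = 1 := by simp
  change _ ≤ ‖deriv (circleTau lam) z‖
  rw [norm_deriv_circleTau hlam hz]
  exact hlower hz
end

section
/- Let λ ∈ ℂ with |λ| < 1 and set z₀ = (λ − 1)/(1 − conj(λ)). Then |z₀| = 1, τ_λ(z₀) = z₀, and the complex derivative of τ_λ at z₀ equals (λ + conj(λ) − 2)/(λ·conj(λ) − 1); in particular τ_λ'(z₀) is a real number. -/
/-- For λ ∈ ℂ with |λ| < 1 and z₀ = (λ − 1)/(1 − conj(λ)): z₀ lies on the unit circle,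
z₀ is a fixed point of τ_λ(z) = z·(λ − z)/(1 − conj(λ)·z), and the complex derivative of
τ_λ at z₀ equals (λ + conj(λ) − 2)/(λ·conj(λ) − 1), which is a real number. -/
theorem circle_map_fixed_point (lam : ℂ) (hlam : ‖lam‖ < 1) :
    ‖(lam - 1) / (1 - (starRingEnd ℂ) lam)‖ = 1 ∧
    ((lam - 1) / (1 - (starRingEnd ℂ) lam)) * (lam - (lam - 1) / (1 - (starRingEnd ℂ) lam)) /
        (1 - (starRingEnd ℂ) lam * ((lam - 1) / (1 - (starRingEnd ℂ) lam))) =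
      (lam - 1) / (1 - (starRingEnd ℂ) lam) ∧
    HasDerivAt (fun w : ℂ => w * (lam - w) / (1 - (starRingEnd ℂ) lam * w))
      ((lam + (starRingEnd ℂ) lam - 2) / (lam * (starRingEnd ℂ) lam - 1))
      ((lam - 1) / (1 - (starRingEnd ℂ) lam)) ∧
    ((lam + (starRingEnd ℂ) lam - 2) / (lam * (starRingEnd ℂ) lam - 1)).im = 0 := by
  have h1 : lam ≠ 1 := by
    intro h; rw [h] at hlam; simp at hlam
  have hc1 : (1 : ℂ) - (starRingEnd ℂ) lam ≠ 0 := by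
    intro h
    apply h1
    have : (starRingEnd ℂ) lam = 1 := by linear_combination -h
    have := congrArg (starRingEnd ℂ) this
    simpa using this
  have hmc : lam * (starRingEnd ℂ) lam - 1 ≠ 0 := by
    intro h
    have : Complex.normSq lam = 1 := by
      have := Complex.mul_conj lam
      have h2 : lam * (starRingEnd ℂ) lam = 1 := by linear_combination h
      rw [h2] at this
      exact_mod_cast this.symm
    have : ‖lam‖ = 1 := by
      rw [← Complex.sq_norm] at this
      nlinarith [norm_nonneg lam]
    linarith
  set z₀ : ℂ := (lam - 1) / (1 - (starRingEnd ℂ) lam) with hz₀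
  have h0 : z₀ * (1 - (starRingEnd ℂ) lam) = lam - 1 := by
    rw [hz₀]; field_simp
  have hden : (1 : ℂ) - (starRingEnd ℂ) lam * z₀ ≠ 0 := by
    intro h
    apply hmc
    have : (1 - (starRingEnd ℂ) lam * z₀) * (1 - (starRingEnd ℂ) lam) = 0 := by
      rw [h]; ring
    have h2 : 1 - lam * (starRingEnd ℂ) lam = 0 := by
      linear_combination this + (starRingEnd ℂ) lam * h0
    linear_combination -h2
  refine ⟨?_, ?_, ?_, ?_⟩
  · rw [norm_div]
    have : ‖1 - (starRingEnd ℂ) lam‖ = ‖lam - 1‖ := by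
      rw [show (1 : ℂ) - (starRingEnd ℂ) lam = (starRingEnd ℂ) (1 - lam) by
        simp, Complex.norm_conj]
      rw [show (1 : ℂ) - lam = -(lam - 1) by ring, norm_neg]
    rw [this, div_self]
    simp [sub_eq_zero, h1]
  · rw [div_eq_iff hden]
    linear_combination (-z₀) * h0
  · have hg : HasDerivAt (fun w : ℂ => w * (lam - w)) (lam - 2 * z₀) z₀ := by
      have := ((hasDerivAt_id z₀).mul ((hasDerivAt_const z₀ lam).sub (hasDerivAt_id z₀)))
      refine this.congr_deriv ?_
      simp; ring
    have hh : HasDerivAt (fun w : ℂ => 1 - (starRingEnd ℂ) lam * w)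
        (-(starRingEnd ℂ) lam) z₀ := by
      have := ((hasDerivAt_const z₀ (1:ℂ)).sub
        ((hasDerivAt_id z₀).const_mul ((starRingEnd ℂ) lam)))
      refine this.congr_deriv ?_
      simp
    have hd := hg.div hh hden
    refine hd.congr_deriv ?_
    symm
    rw [div_eq_div_iff hmc (pow_ne_zero 2 hden)]
    linear_combination ((starRingEnd ℂ) lam * (lam + 1) - 2 +
      z₀ * (starRingEnd ℂ) lam * (1 - (starRingEnd ℂ) lam)) * h0
  · have key : (lam + (starRingEnd ℂ) lam - 2) / (lam * (starRingEnd ℂ) lam - 1) =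
        (((2 * lam.re - 2) / (Complex.normSq lam - 1) : ℝ) : ℂ) := by
      rw [Complex.add_conj, Complex.mul_conj]
      push_cast
      ring
    rw [key, Complex.ofReal_im]
end

section
/- For every λ ∈ (−1,1) and every x ∈ ℝ, one has exp(iπ·F(x)) = τ_λ(exp(iπ·x)); that is, F is a lift of the circle map τ_λ under the projection p(x) = exp(iπx). -/
/-!
On the unit circle `z (λ - z) = -z² (1 - λ z̄)`, so `τ_λ(z) = -z² · w̄ / w` with `w = 1 - λ z`.
For `z = exp (iπx)` the number `w̄ = (1 - λ cos πx) + i λ sin πx` has positive real part when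
`|λ| < 1`, hence `w̄ / w = exp (2i arctan (λ sin πx / (1 - λ cos πx)))`, while
`-z² = exp (iπ (2x + 1))`. Multiplying the two gives `exp (iπ F(x))`.
-/

open Complex ComplexConjugate

lemma Complex.exp_two_arctan_div_mul_I {a : ℝ} (ha : 0 < a) (b : ℝ) :
    exp (↑(2 * Real.arctan (b / a)) * I) = (a + b * I) / (a - b * I) := by
  set t := b / a
  have hb : (b : ℂ) = a * t := by simp only [t]; push_cast; field_simp [ha.ne']
  have hsq : ((√(1 + t ^ 2) : ℝ) : ℂ) ^ 2 = 1 + t ^ 2 := by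
    rw [← ofReal_pow, Real.sq_sqrt (by positivity)]; push_cast; ring
  have hsqrt : ((√(1 + t ^ 2) : ℝ) : ℂ) ≠ 0 := by
    exact_mod_cast (Real.sqrt_pos.mpr (by positivity)).ne'
  have hden : (a : ℂ) - b * I ≠ 0 := fun h => by
    simpa [ha.ne'] using congrArg re h
  rw [show (↑(2 * Real.arctan t) : ℂ) * I = Real.arctan t * I + Real.arctan t * I by
      push_cast; ring,
    exp_add, exp_mul_I, ← ofReal_cos, ← ofReal_sin, Real.cos_arctan, Real.sin_arctan,
    eq_div_iff hden, hb]
  push_cast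
  field_simp
  linear_combination (-(1 + t * I) * a) * hsq - (1 + t * I) * a * t ^ 2 * I_sq

lemma Complex.mul_sub_eq_neg_sq_mul_one_sub_mul_conj {z : ℂ} (hz : ‖z‖ = 1) (w : ℂ) :
    z * (w - z) = -z ^ 2 * (1 - w * conj z) := by
  have hzz : z * conj z = 1 := by rw [mul_conj, normSq_eq_norm_sq, hz]; norm_num
  linear_combination (-z * w) * hzz

lemma one_sub_mul_cos_pos {lam : ℝ} (hlam : lam ∈ Set.Ioo (-1 : ℝ) 1) (θ : ℝ) :
    0 < 1 - lam * Real.cos θ := by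
  have : |lam * Real.cos θ| < 1 := by
    rw [abs_mul]
    exact mul_lt_one_of_nonneg_of_lt_one_left (abs_nonneg _) (abs_lt.mpr hlam)
      (Real.abs_cos_le_one θ)
  linarith [le_abs_self (lam * Real.cos θ)]

/-- For λ ∈ (−1,1) the map F(x) = 2x + 1 + (2/π)·arctan(λ·sin(πx)/(1 − λ·cos(πx))) is a
lift of the circle map τ_λ(z) = z·(λ − z)/(1 − conj(λ)·z) under the projection
p(x) = exp(iπx): for all x ∈ ℝ one has exp(iπ·F(x)) = τ_λ(exp(iπx)). -/
theorem lift_of_circle_map (lam : ℝ) (hlam : lam ∈ Set.Ioo (-1 : ℝ) 1) (x : ℝ) :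
    Complex.exp ((Real.pi * (2 * x + 1 + (2 / Real.pi) *
        Real.arctan (lam * Real.sin (Real.pi * x) / (1 - lam * Real.cos (Real.pi * x)))) : ℝ)
        * Complex.I) =
      Complex.exp ((Real.pi * x : ℝ) * Complex.I) *
          ((lam : ℂ) - Complex.exp ((Real.pi * x : ℝ) * Complex.I)) /
        (1 - (starRingEnd ℂ) (lam : ℂ) * Complex.exp ((Real.pi * x : ℝ) * Complex.I)) := by
  set θ := Real.pi * x
  set t := lam * Real.sin θ / (1 - lam * Real.cos θ)
  have hF : Real.pi * (2 * x + 1 + (2 / Real.pi) * Real.arctan t)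
      = θ + θ + Real.pi + 2 * Real.arctan t := by
    field_simp [Real.pi_ne_zero]; ring
  have hlhs : exp (↑(θ + θ + Real.pi + 2 * Real.arctan t) * I) = -exp (θ * I) ^ 2 *
      ((↑(1 - lam * Real.cos θ) + ↑(lam * Real.sin θ) * I) /
        (↑(1 - lam * Real.cos θ) - ↑(lam * Real.sin θ) * I)) := by
    simp only [t, ofReal_add, add_mul, exp_add, exp_pi_mul_I,
      exp_two_arctan_div_mul_I (one_sub_mul_cos_pos hlam θ)]
    ring
  have hz : exp (θ * I) = Real.cos θ + Real.sin θ * I := by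
    rw [exp_mul_I, ← ofReal_cos, ← ofReal_sin]
  rw [hF, hlhs, mul_sub_eq_neg_sq_mul_one_sub_mul_conj (norm_exp_ofReal_mul_I θ), mul_div_assoc,
    conj_ofReal, hz]
  simp only [map_add, map_mul, conj_ofReal, conj_I]
  push_cast
  ring
end

section
/- For every λ ∈ (−1,1) and every x ∈ ℝ, one has F(Φ(x)) = x; that is, the increasing map F : ℝ → ℝ is the inverse of the diffeomorphism Φ. -/
/-- For λ ∈ (−1,1), with Φ(x) = x/2 − (1/π)·arccos(λ·cos(πx/2)) and
F(x) = 2x + 1 + (2/π)·arctan(λ·sin(πx)/(1 − λ·cos(πx))), one has F(Φ(x)) = x for all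
x ∈ ℝ: the increasing map F is the inverse of the diffeomorphism Φ. -/
theorem lift_inverse_of_branch (lam : ℝ) (hlam : lam ∈ Set.Ioo (-1 : ℝ) 1) (x : ℝ) :
    (fun y : ℝ => 2 * y + 1 + (2 / Real.pi) *
        Real.arctan (lam * Real.sin (Real.pi * y) / (1 - lam * Real.cos (Real.pi * y))))
      (x / 2 - (1 / Real.pi) * Real.arccos (lam * Real.cos (Real.pi * x / 2))) = x := by
  obtain ⟨h1, h2⟩ := hlam
  have hpi : Real.pi ≠ 0 := Real.pi_ne_zero
  set t := Real.pi * x / 2 with ht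
  set c := lam * Real.cos t with hc
  have habs : |c| < 1 := by
    rw [hc, abs_mul]
    calc |lam| * |Real.cos t| ≤ |lam| * 1 :=
          mul_le_mul_of_nonneg_left (Real.abs_cos_le_one t) (abs_nonneg _)
      _ < 1 := by rw [mul_one]; exact abs_lt.mpr ⟨h1, h2⟩
  obtain ⟨hc1, hc2⟩ := abs_lt.mp habs
  set θ := Real.arccos c with hθ
  have hθ1 : 0 < θ := Real.arccos_pos.mpr hc2
  have hθ2 : θ < Real.pi := by
    rw [hθ, Real.arccos_eq_pi_div_two_sub_arcsin]
    have := Real.neg_pi_div_two_lt_arcsin.mpr hc1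
    linarith
  have hcosθ : Real.cos θ = c := Real.cos_arccos hc1.le hc2.le
  have hsinθ : 0 < Real.sin θ := Real.sin_pos_of_pos_of_lt_pi hθ1 hθ2
  set s := lam * Real.sin t with hs
  have hpyth : Real.sin θ ^ 2 + Real.cos θ ^ 2 = 1 := Real.sin_sq_add_cos_sq θ
  have hpyth2 : Real.sin t ^ 2 + Real.cos t ^ 2 = 1 := Real.sin_sq_add_cos_sq t
  have hsq : s ^ 2 < Real.sin θ ^ 2 := by
    have : Real.sin θ ^ 2 = 1 - c ^ 2 := by nlinarith
    rw [this, hc, hs]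
    nlinarith [sq_nonneg lam, abs_lt.mpr ⟨h1, h2⟩]
  have hsgt : s < Real.sin θ := by nlinarith
  have harg : Real.pi * (x / 2 - 1 / Real.pi * θ) = t - θ := by
    field_simp [ht]; ring
  simp only
  rw [harg]
  have hnum : lam * Real.sin (t - θ) = Real.cos θ * (s - Real.sin θ) := by
    rw [Real.sin_sub, hcosθ, hc, hs]; ring
  have hden : 1 - lam * Real.cos (t - θ) = Real.sin θ * (Real.sin θ - s) := by
    rw [Real.cos_sub]
    have hcc : lam * Real.cos t = Real.cos θ := by rw [hcosθ, hc]
    nlinarith [hpyth, hcc]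
  have hratio : lam * Real.sin (t - θ) / (1 - lam * Real.cos (t - θ)) =
      -(Real.cos θ / Real.sin θ) := by
    rw [hnum, hden]
    have h3 : Real.sin θ - s ≠ 0 := by linarith
    field_simp
    ring
  rw [hratio]
  have htan : -(Real.cos θ / Real.sin θ) = Real.tan (θ - Real.pi / 2) := by
    rw [Real.tan_eq_sin_div_cos, Real.sin_sub, Real.cos_sub, Real.sin_pi_div_two,
      Real.cos_pi_div_two]
    ring_nf
  have hat : Real.arctan (-(Real.cos θ / Real.sin θ)) = θ - Real.pi / 2 := by
    rw [htan, Real.arctan_tan (by linarith) (by linarith)]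
  rw [hat]
  field_simp
  ring
end

section
/- Let U ⊆ ℂ be an open set containing the unit circle, let τ : ℂ → ℂ be complex differentiable on U with |τ(z)| = 1 for every z with |z| = 1, and let α > 0 be such that |τ'(z)| ≥ α for every z with |z| = 1. Then for every z with |z| = 1 the quantity z·τ'(z)/τ(z) is a real number, and moreover either Re(z·τ'(z)/τ(z)) ≥ α for all z with |z| = 1, or Re(z·τ'(z)/τ(z)) ≤ −α for all z with |z| = 1. -/
open Complex ComplexConjugate Filter InnerProductSpace Topology

/-!
Differentiating `θ ↦ ‖τ (z e^{iθ})‖² ≡ 1` at `θ = 0` shows that `τ'(z) · i z` is orthogonal to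
`τ z`, i.e. that `z τ'(z) / τ(z) = z τ'(z) conj (τ z)` is real. Its modulus is `‖τ'(z)‖ ≥ α`, so
its real part is a continuous function (`τ'` is again holomorphic on `U`) on the connected unit
circle avoiding `(-α, α)`, and hence stays on one side of that interval.
-/

theorem HasDerivAt.inner_eq_zero_of_norm_eventually_eq {F : Type*} [NormedAddCommGroup F]
    [InnerProductSpace ℝ F] {f : ℝ → F} {f' : F} {t c : ℝ} (hf : HasDerivAt f f' t)
    (hc : ∀ᶠ s in 𝓝 t, ‖f s‖ = c) : ⟪f t, f'⟫_ℝ = 0 := by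
  have hconst : HasDerivAt (‖f ·‖ ^ 2) 0 t :=
    (hasDerivAt_const t (c ^ 2)).congr_of_eventuallyEq (hc.mono fun s hs => by simp [hs])
  have := hf.norm_sq.unique hconst
  linarith

theorem im_mul_deriv_div_eq_zero_of_norm_eq_one {τ : ℂ → ℂ}
    (hmod : ∀ w : ℂ, ‖w‖ = 1 → ‖τ w‖ = 1) {z : ℂ} (hz : ‖z‖ = 1)
    (hτ : DifferentiableAt ℂ τ z) : (z * deriv τ z / τ z).im = 0 := by
  set γ : ℝ → ℂ := fun θ => z * circleMap 0 1 θ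
  have hγ : HasDerivAt γ (z * I) 0 :=
    ((hasDerivAt_circleMap 0 1 0).const_mul z).congr_deriv (by simp [circleMap_zero])
  have hγ0 : γ 0 = z := by simp [γ, circleMap_zero]
  have hγ_norm (θ : ℝ) : ‖γ θ‖ = 1 := by simp [γ, hz]
  have hτγ : HasDerivAt (τ ∘ γ) (deriv τ z * (z * I)) 0 := by
    refine HasDerivAt.comp 0 ?_ hγ
    rw [hγ0]
    exact hτ.hasDerivAt
  have horth := hτγ.inner_eq_zero_of_norm_eventually_eq
    (Eventually.of_forall fun θ => hmod _ (hγ_norm θ))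
  rw [Function.comp_apply, hγ0, Complex.inner] at horth
  have hrot : (z * deriv τ z * conj (τ z) * I).re = 0 := by rw [← horth]; ring_nf
  rw [div_eq_mul_inv, Complex.inv_eq_conj (hmod z hz)]
  rwa [mul_I_re, neg_eq_zero] at hrot

theorem norm_mul_deriv_div_eq_of_norm_eq_one {τ : ℂ → ℂ}
    (hmod : ∀ w : ℂ, ‖w‖ = 1 → ‖τ w‖ = 1) {z : ℂ} (hz : ‖z‖ = 1) :
    ‖z * deriv τ z / τ z‖ = ‖deriv τ z‖ := by
  rw [norm_div, norm_mul, hz, hmod z hz, one_mul, div_one]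

theorem IsPreconnected.forall_le_or_forall_le_neg_of_le_abs {X : Type*} [TopologicalSpace X]
    {S : Set X} (hS : IsPreconnected S) {g : X → ℝ} (hg : ContinuousOn g S) {α : ℝ}
    (hα : 0 < α) (habs : ∀ x ∈ S, α ≤ |g x|) :
    (∀ x ∈ S, α ≤ g x) ∨ (∀ x ∈ S, g x ≤ -α) := by
  have hside (x : X) (hx : x ∈ S) : α ≤ g x ∨ g x ≤ -α := le_abs'.mp (habs x hx) |>.symm
  by_contra! ⟨⟨y, hy, hgy⟩, ⟨x, hx, hgx⟩⟩
  have hgy' : g y ≤ -α := (hside y hy).resolve_left (not_le.mpr hgy)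
  have hgx' : α ≤ g x := (hside x hx).resolve_right (not_le.mpr hgx)
  obtain ⟨w, hw, hgw⟩ := hS.intermediate_value hy hx hg
    (show (0 : ℝ) ∈ Set.Icc (g y) (g x) from ⟨by linarith, by linarith⟩)
  linarith [habs w hw, show |g w| = 0 by simp [hgw]]

/-- Let U be open containing the unit circle, τ complex differentiable on U with
|τ(z)| = 1 on the unit circle and |τ'(z)| ≥ α > 0 on the unit circle. Then for every z
on the unit circle the quantity z·τ'(z)/τ(z) is real, and either Re(z·τ'(z)/τ(z)) ≥ α
everywhere on the circle or Re(z·τ'(z)/τ(z)) ≤ −α everywhere on the circle. -/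
theorem logarithmic_derivative_real_on_circle (U : Set ℂ) (hU : IsOpen U)
    (hsub : Metric.sphere (0 : ℂ) 1 ⊆ U)
    (τ : ℂ → ℂ) (hdiff : ∀ z ∈ U, DifferentiableAt ℂ τ z)
    (hmod : ∀ z : ℂ, ‖z‖ = 1 → ‖τ z‖ = 1)
    (α : ℝ) (hα : 0 < α)
    (hexp : ∀ z : ℂ, ‖z‖ = 1 → α ≤ ‖deriv τ z‖) :
    (∀ z : ℂ, ‖z‖ = 1 → (z * deriv τ z / τ z).im = 0) ∧
    ((∀ z : ℂ, ‖z‖ = 1 → α ≤ (z * deriv τ z / τ z).re) ∨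
     (∀ z : ℂ, ‖z‖ = 1 → (z * deriv τ z / τ z).re ≤ -α)) := by
  have hsphere (z : ℂ) : z ∈ Metric.sphere (0 : ℂ) 1 ↔ ‖z‖ = 1 := mem_sphere_zero_iff_norm
  have him (z : ℂ) (hz : ‖z‖ = 1) : (z * deriv τ z / τ z).im = 0 :=
    im_mul_deriv_div_eq_zero_of_norm_eq_one hmod hz (hdiff z (hsub ((hsphere z).2 hz)))
  have hτ : DifferentiableOn ℂ τ U := fun z hz => (hdiff z hz).differentiableWithinAt
  have hcont : ContinuousOn (fun z => (z * deriv τ z / τ z).re) (Metric.sphere 0 1) :=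
    continuous_re.comp_continuousOn <|
      (continuousOn_id.mul ((hτ.deriv hU).continuousOn.mono hsub)).div (hτ.continuousOn.mono hsub)
        fun z hz => norm_ne_zero_iff.mp (by simp [hmod z ((hsphere z).1 hz)])
  have habs (z : ℂ) (hz : z ∈ Metric.sphere (0 : ℂ) 1) : α ≤ |(z * deriv τ z / τ z).re| := by
    rw [hsphere] at hz
    rw [abs_re_eq_norm.mpr (him z hz), norm_mul_deriv_div_eq_of_norm_eq_one hmod hz]
    exact hexp z hz
  refine ⟨him, ?_⟩
  simpa only [hsphere] using ((isConnected_sphere (by simp) 0 zero_le_one).isPreconnected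
    |>.forall_le_or_forall_le_neg_of_le_abs hcont hα habs)
end

section
/- Let 0 < r₁ < 1 < R₁ and let U ⊆ ℂ be an open set containing the closed annulus {z ∈ ℂ : r₁ ≤ |z| ≤ R₁}. Let τ : ℂ → ℂ be complex differentiable on U with τ(z) ≠ 0 for all z ∈ U, suppose |τ(z)| = 1 for every z with |z| = 1, and suppose there is α > 1 with |τ'(z)| ≥ α for all z in the closed annulus. Then there exist r and R with r₁ ≤ r < 1 < R ≤ R₁ such that for every z with |z| = r or |z| = R one has |τ(z)| < r or |τ(z)| > R; that is, the image under τ of the boundary of the annulus {r ≤ |z| ≤ R} is disjoint from that closed annulus. -/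
/-!
Since `|τ| = 1` on the unit circle, differentiating `|τ (w e^{iθ})|²` at `θ = 0` shows that
`c = conj (τ w) · w · τ'(w)` is real for `|w| = 1`, with `|c| = |τ'(w)| ≥ α`. Along the radius
through `w` this gives `τ (s w) = τ w · (1 + (s - 1) c) + o(|s - 1|)`, so `|τ (s w)|` differs
from `1` by roughly `|c| |s - 1| ≥ α |s - 1|`, more than `|s - 1|`. As `τ'` is uniformly
continuous on the compact annulus, the error term is uniform in `w`, so for small `ε` both
circles `|z| = 1 ± ε` are mapped off the annulus `1 - ε ≤ |z| ≤ 1 + ε`.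
-/

open Complex ComplexConjugate Set

theorem isCompact_setOf_le_norm_le {E : Type*} [NormedAddCommGroup E] [ProperSpace E]
    (a b : ℝ) : IsCompact {z : E | a ≤ ‖z‖ ∧ ‖z‖ ≤ b} :=
  (isCompact_closedBall (0 : E) b).of_isClosed_subset
    ((isClosed_le continuous_const continuous_norm).inter
      (isClosed_le continuous_norm continuous_const)) fun z hz => by simpa using hz.2

theorem segment_smul_subset_setOf_le_norm_le {E : Type*} [NormedAddCommGroup E]
    [NormedSpace ℝ E] {w : E} {s a b : ℝ} (hw : ‖w‖ = 1) (ha : 0 ≤ a) (ha1 : a ≤ 1)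
    (hb1 : 1 ≤ b) (has : a ≤ s) (hsb : s ≤ b) :
    segment ℝ w (s • w) ⊆ {z | a ≤ ‖z‖ ∧ ‖z‖ ≤ b} := by
  have hconv : Convex ℝ ((fun t : ℝ => t • w) '' Icc a b) :=
    (convex_Icc a b).linear_image (LinearMap.toSpanSingleton ℝ E w)
  refine (hconv.segment_subset ⟨1, ⟨ha1, hb1⟩, one_smul ℝ w⟩ ⟨s, ⟨has, hsb⟩, rfl⟩).trans ?_
  rintro _ ⟨t, ⟨hat, htb⟩, rfl⟩
  show a ≤ ‖t • w‖ ∧ ‖t • w‖ ≤ b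
  rw [norm_smul, hw, mul_one, Real.norm_eq_abs, abs_of_nonneg (ha.trans hat)]
  exact ⟨hat, htb⟩

theorem IsCompact.exists_pos_forall_norm_image_sub_sub_fderiv_le {𝕜 E F : Type*} [RCLike 𝕜]
    [NormedAddCommGroup E] [NormedSpace ℝ E] [NormedSpace 𝕜 E]
    [NormedAddCommGroup F] [NormedSpace 𝕜 F] {f : E → F} {K : Set E} (hK : IsCompact K)
    (hf : ∀ x ∈ K, DifferentiableAt 𝕜 f x) (hf' : ContinuousOn (fderiv 𝕜 f) K)
    {δ : ℝ} (hδ : 0 < δ) :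
    ∃ η > 0, ∀ w z, segment ℝ w z ⊆ K → ‖z - w‖ < η →
      ‖f z - f w - fderiv 𝕜 f w (z - w)‖ ≤ δ * ‖z - w‖ := by
  obtain ⟨η, hη, hclose⟩ := Metric.uniformContinuousOn_iff_le.mp
    (hK.uniformContinuousOn_of_continuous hf') δ hδ
  refine ⟨η, hη, fun w z hwz hzw => ?_⟩
  refine (convex_segment w z).norm_image_sub_le_of_norm_fderiv_le' (fun x hx => hf x (hwz hx))
    (fun x hx => ?_) (left_mem_segment ℝ w z) (right_mem_segment ℝ w z)
  rw [← dist_eq_norm]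
  refine hclose x (hwz hx) w (hwz (left_mem_segment ℝ w z)) ?_
  rw [dist_eq_norm]
  exact (norm_sub_le_of_mem_segment hx).trans hzw.le

theorem im_conj_mul_mul_deriv_eq_zero {τ : ℂ → ℂ} {w : ℂ}
    (hmod : ∀ z : ℂ, ‖z‖ = 1 → ‖τ z‖ = 1) (hw : ‖w‖ = 1) (hτ : DifferentiableAt ℂ τ w) :
    (conj (τ w) * (w * deriv τ w)).im = 0 := by
  have hγ : HasDerivAt (fun θ : ℝ => w * exp (θ * I)) (w * I) 0 := by
    simpa using ((hasDerivAt_id (0 : ℝ)).ofReal_comp.mul_const I).cexp.const_mul w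
  have hτγ : HasDerivAt (fun θ : ℝ => τ (w * exp (θ * I))) (deriv τ w * (w * I)) 0 :=
    hτ.hasDerivAt.comp_of_eq 0 hγ (by simp)
  have hconst : (fun θ : ℝ => ‖τ (w * exp (θ * I))‖ ^ 2) = fun _ => 1 := by
    ext θ
    rw [hmod _ (by simp [hw, norm_exp_ofReal_mul_I]), one_pow]
  have h := hτγ.norm_sq.unique (hconst ▸ hasDerivAt_const (0 : ℝ) (1 : ℝ))
  rw [Complex.inner] at h
  simp only [ofReal_zero, zero_mul, exp_zero, mul_one, mul_re, mul_im, I_re, I_im, conj_re,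
    conj_im] at h ⊢
  linear_combination -h / 2

theorem exists_real_norm_add_mul_deriv {τ : ℂ → ℂ} {w : ℂ}
    (hmod : ∀ z : ℂ, ‖z‖ = 1 → ‖τ z‖ = 1) (hw : ‖w‖ = 1)
    (him : (conj (τ w) * (w * deriv τ w)).im = 0) :
    ∃ c : ℝ, |c| = ‖deriv τ w‖ ∧ ∀ t : ℝ, ‖τ w + t * w * deriv τ w‖ = |1 + t * c| := by
  set c := conj (τ w) * (w * deriv τ w)
  have hc : (c.re : ℂ) = c := Complex.ext rfl him.symm
  have hτw : τ w * conj (τ w) = 1 := by rw [mul_conj', hmod w hw]; norm_num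
  refine ⟨c.re, ?_, fun t => ?_⟩
  · rw [← Real.norm_eq_abs, ← Complex.norm_real, hc]
    simp [c, hmod w hw, hw]
  · have : τ w + t * w * deriv τ w = τ w * ((1 + t * c.re : ℝ) : ℂ) := by
      push_cast
      rw [hc]
      linear_combination (-(t * w * deriv τ w)) * hτw
    rw [this, norm_mul, hmod w hw, one_mul, Complex.norm_real, Real.norm_eq_abs]

theorem lt_one_sub_or_one_add_lt {α δ ε x t : ℝ} (hε : 0 < ε) (hδ : δ < α - 1)
    (hαx : α * ε ≤ |x|) (hx : |x| ≤ 1) (ht : |t - (|1 + x|)| ≤ δ * ε) :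
    t < 1 - ε ∨ 1 + ε < t := by
  have hδε : δ * ε < (α - 1) * ε := mul_lt_mul_of_pos_right hδ hε
  rw [abs_of_nonneg (a := 1 + x) (by linarith [neg_abs_le x])] at ht
  rcases abs_le.mp ht with ⟨ht₁, ht₂⟩
  rcases le_or_gt 0 x with hx0 | hx0
  · rw [abs_of_nonneg hx0] at hαx
    right; linarith
  · rw [abs_of_neg hx0] at hαx
    left; linarith

theorem norm_apply_smul_lt_or_gt {τ : ℂ → ℂ} {w : ℂ} {s α δ ε : ℝ}
    (hmod : ∀ z : ℂ, ‖z‖ = 1 → ‖τ z‖ = 1) (hw : ‖w‖ = 1) (hτ : DifferentiableAt ℂ τ w)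
    (hα : α ≤ ‖deriv τ w‖) (hδ : δ < α - 1) (hε : 0 < ε) (hετ : ε * ‖deriv τ w‖ ≤ 1)
    (hs : |s - 1| = ε) (hlin : ‖τ (s • w) - τ w - (s • w - w) * deriv τ w‖ ≤ δ * ε) :
    ‖τ (s • w)‖ < 1 - ε ∨ 1 + ε < ‖τ (s • w)‖ := by
  obtain ⟨c, hc, hτc⟩ :=
    exists_real_norm_add_mul_deriv hmod hw (im_conj_mul_mul_deriv_eq_zero hmod hw hτ)
  have hx : |(s - 1) * c| = ε * ‖deriv τ w‖ := by rw [abs_mul, hs, hc]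
  refine lt_one_sub_or_one_add_lt hε hδ ?_ (hx.trans_le hετ) ?_
  · rw [hx, mul_comm α]
    exact mul_le_mul_of_nonneg_left hα hε.le
  · rw [← hτc]
    refine (abs_norm_sub_norm_le _ _).trans (le_of_eq_of_le ?_ hlin)
    rw [Complex.real_smul]
    congr 1
    push_cast
    ring

theorem exists_pos_forall_norm_apply_smul_lt_or_gt {r₁ R₁ α : ℝ} {τ : ℂ → ℂ}
    (hr₁ : 0 ≤ r₁) (hr₁1 : r₁ < 1) (hR₁ : 1 < R₁) (hα : 1 < α)
    (hmod : ∀ z : ℂ, ‖z‖ = 1 → ‖τ z‖ = 1)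
    (hτ : ∀ z ∈ {z : ℂ | r₁ ≤ ‖z‖ ∧ ‖z‖ ≤ R₁}, DifferentiableAt ℂ τ z)
    (hτ' : ContinuousOn (fderiv ℂ τ) {z : ℂ | r₁ ≤ ‖z‖ ∧ ‖z‖ ≤ R₁})
    (hexp : ∀ z : ℂ, r₁ ≤ ‖z‖ → ‖z‖ ≤ R₁ → α ≤ ‖deriv τ z‖) :
    ∃ ε > 0, ε ≤ 1 - r₁ ∧ ε ≤ R₁ - 1 ∧ ∀ w : ℂ, ‖w‖ = 1 → ∀ s : ℝ, |s - 1| = ε →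
      ‖τ (s • w)‖ < 1 - ε ∨ 1 + ε < ‖τ (s • w)‖ := by
  set K := {z : ℂ | r₁ ≤ ‖z‖ ∧ ‖z‖ ≤ R₁}
  have hK : IsCompact K := isCompact_setOf_le_norm_le r₁ R₁
  obtain ⟨η, hη, hlin⟩ := hK.exists_pos_forall_norm_image_sub_sub_fderiv_le hτ hτ'
    (δ := (α - 1) / 2) (by linarith)
  obtain ⟨M, hM⟩ : ∃ M, ∀ z ∈ K, ‖deriv τ z‖ ≤ M :=
    hK.exists_bound_of_continuousOn (hτ'.clm_apply continuousOn_const)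
  obtain ⟨c, hc, hMc⟩ := exists_pos_mul_lt one_pos M
  set ε := min (min (1 - r₁) (R₁ - 1)) (min (η / 2) c)
  have hε : 0 < ε := lt_min (lt_min (by linarith) (by linarith)) (lt_min (by linarith) hc)
  have hεr : ε ≤ 1 - r₁ := (min_le_left _ _).trans (min_le_left _ _)
  have hεR : ε ≤ R₁ - 1 := (min_le_left _ _).trans (min_le_right _ _)
  have hεη : ε < η := (min_le_right _ _).trans_lt ((min_le_left _ _).trans_lt (half_lt_self hη))
  have hεc : ε ≤ c := (min_le_right _ _).trans (min_le_right _ _)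
  refine ⟨ε, hε, hεr, hεR, fun w hw s hs => ?_⟩
  have hwK : w ∈ K := by simp only [K, mem_ofPred_eq, hw]; constructor <;> linarith
  have hdist : ‖s • w - w‖ = ε := by
    rw [show s • w - w = (s - 1) • w by module, norm_smul, hw, mul_one, Real.norm_eq_abs, hs]
  have hετ : ε * ‖deriv τ w‖ ≤ 1 :=
    (mul_le_mul hεc (hM w hwK) (norm_nonneg _) hc.le).trans (by linarith [mul_comm M c])
  have hseg : segment ℝ w (s • w) ⊆ K := by
    obtain ⟨hs₁, hs₂⟩ := abs_le.mp hs.le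
    exact segment_smul_subset_setOf_le_norm_le hw hr₁ hr₁1.le hR₁.le (by linarith) (by linarith)
  refine norm_apply_smul_lt_or_gt hmod hw (hτ w hwK) (hexp w hwK.1 hwK.2)
    (δ := (α - 1) / 2) (by linarith) hε hετ hs ?_
  have h := hlin w (s • w) hseg (hdist ▸ hεη)
  rwa [fderiv_eq_smul_deriv, smul_eq_mul, hdist] at h

theorem annulus_boundary_mapped_outside_general (r₁ R₁ : ℝ) (hr₁ : 0 < r₁) (hr₁1 : r₁ < 1)
    (hR₁ : 1 < R₁) (U : Set ℂ) (hU : IsOpen U)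
    (hsub : {z : ℂ | r₁ ≤ ‖z‖ ∧ ‖z‖ ≤ R₁} ⊆ U)
    (τ : ℂ → ℂ) (hdiff : ∀ z ∈ U, DifferentiableAt ℂ τ z)
    (hmod : ∀ z : ℂ, ‖z‖ = 1 → ‖τ z‖ = 1)
    (α : ℝ) (hα : 1 < α)
    (hexp : ∀ z : ℂ, r₁ ≤ ‖z‖ → ‖z‖ ≤ R₁ → α ≤ ‖deriv τ z‖) :
    ∃ r R : ℝ, r₁ ≤ r ∧ r < 1 ∧ 1 < R ∧ R ≤ R₁ ∧
      ∀ z : ℂ, (‖z‖ = r ∨ ‖z‖ = R) →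
        (‖τ z‖ < r ∨ R < ‖τ z‖) := by
  have hτ : DifferentiableOn ℂ τ U := fun z hz => (hdiff z hz).differentiableWithinAt
  obtain ⟨ε, hε, hεr, hεR, hradial⟩ := exists_pos_forall_norm_apply_smul_lt_or_gt hr₁.le hr₁1
    hR₁ hα hmod (fun z hz => hdiff z (hsub hz))
    (((hτ.contDiffOn hU (n := 1)).continuousOn_fderiv_of_isOpen hU le_rfl).mono hsub) hexp
  refine ⟨1 - ε, 1 + ε, by linarith, by linarith, by linarith, by linarith, fun z hz => ?_⟩
  have hs : |‖z‖ - 1| = ε := by rcases hz with h | h <;> simp [h, abs_of_pos hε]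
  have hz₀ : z ≠ 0 := by rintro rfl; rcases hz with h | h <;> simp at h <;> linarith
  have hz : ‖z‖ ≠ 0 := norm_ne_zero_iff.2 hz₀
  have hw : ‖‖z‖⁻¹ • z‖ = 1 := by rw [norm_smul, norm_inv, norm_norm, inv_mul_cancel₀ hz]
  simpa only [smul_inv_smul₀ hz] using hradial _ hw _ hs

/-- Let 0 < r₁ < 1 < R₁ and U open containing the closed annulus r₁ ≤ |z| ≤ R₁. If τ is
complex differentiable and nonvanishing on U, |τ| = 1 on the unit circle, and
|τ'| ≥ α > 1 on the closed annulus, then there are radii r, R with r₁ ≤ r < 1 < R ≤ R₁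
such that the image under τ of the boundary of the annulus r ≤ |z| ≤ R is disjoint from
that closed annulus: every boundary point is mapped to modulus < r or > R. -/
theorem annulus_boundary_mapped_outside (r₁ R₁ : ℝ) (hr₁ : 0 < r₁) (hr₁1 : r₁ < 1)
    (hR₁ : 1 < R₁) (U : Set ℂ) (hU : IsOpen U)
    (hsub : {z : ℂ | r₁ ≤ ‖z‖ ∧ ‖z‖ ≤ R₁} ⊆ U)
    (τ : ℂ → ℂ) (hdiff : ∀ z ∈ U, DifferentiableAt ℂ τ z)
    (hne : ∀ z ∈ U, τ z ≠ 0)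
    (hmod : ∀ z : ℂ, ‖z‖ = 1 → ‖τ z‖ = 1)
    (α : ℝ) (hα : 1 < α)
    (hexp : ∀ z : ℂ, r₁ ≤ ‖z‖ → ‖z‖ ≤ R₁ → α ≤ ‖deriv τ z‖) :
    ∃ r R : ℝ, r₁ ≤ r ∧ r < 1 ∧ 1 < R ∧ R ≤ R₁ ∧
      ∀ z : ℂ, (‖z‖ = r ∨ ‖z‖ = R) →
        (‖τ z‖ < r ∨ R < ‖τ z‖) :=
  annulus_boundary_mapped_outside_general r₁ R₁ hr₁ hr₁1 hR₁ U hU hsub τ hdiff hmod α hα hexp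
end

section
/- For every λ ∈ ℂ with |λ| < 1 and all integers n and l, the matrix coefficients satisfy L(−n, −l) = conj(L(n, l)). -/
/-!
On the unit circle `conj z = z⁻¹`, so `conj dz = -dz / z²`, and the factor
`b(z) = (1 - conj λ z) / (λ - z)` satisfies `conj b = b⁻¹`. Conjugating the integrand of
`L(n, l)` therefore produces minus the integrand of `L(-n, -l)`, and the sign is absorbed by
`conj (1 / (2πi)) = -1 / (2πi)`.
-/

/-- The matrix coefficient L(n,l) = (1/(2πi))·∮_{|z|=1} z^{l−n−1}·((1 − conj(λ)z)/(λ − z))^n dz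
of the transfer operator of the circle map τ_λ(z) = z(λ − z)/(1 − conj(λ)z). -/
noncomputable def transferCoef (lam : ℂ) (n l : ℤ) : ℂ :=
  (1 / (2 * Real.pi * Complex.I)) *
    ∮ z in C(0, 1), z ^ (l - n - 1) * ((1 - (starRingEnd ℂ) lam * z) / (lam - z)) ^ n

open Complex ComplexConjugate

theorem conj_circleMap_zero_eq_sq_div (R θ : ℝ) :
    conj (circleMap 0 R θ) = (R : ℂ) ^ 2 / circleMap 0 R θ := by
  rcases eq_or_ne (circleMap 0 R θ) 0 with h | h
  · simp [h]
  · rw [eq_div_iff h, mul_comm, mul_conj', norm_circleMap_zero, ← ofReal_pow, sq_abs, ofReal_pow]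

theorem conj_circleIntegral (f : ℂ → ℂ) (c : ℂ) (R : ℝ) :
    conj (∮ z in C(c, R), f z) = -∮ z in C(c, R), (R : ℂ) ^ 2 / (z - c) ^ 2 * conj (f z) := by
  simp only [circleIntegral, ← intervalIntegral.intervalIntegral_conj,
    ← intervalIntegral.integral_neg]
  refine intervalIntegral.integral_congr fun θ _ => ?_
  rw [deriv_circleMap, circleMap_sub_center, smul_eq_mul, smul_eq_mul, map_mul, map_mul,
    conj_circleMap_zero_eq_sq_div, conj_I]
  rcases eq_or_ne (circleMap 0 R θ) 0 with h | h
  · simp [h]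
  · field_simp

theorem conj_one_sub_conj_mul_div_sub_eq_inv (a : ℂ) {z : ℂ} (hz : ‖z‖ = 1) :
    conj ((1 - conj a * z) / (a - z)) = ((1 - conj a * z) / (a - z))⁻¹ := by
  have hz0 : z ≠ 0 := by rintro rfl; simp at hz
  rw [map_div₀, inv_div, map_sub, map_sub, map_one, map_mul, conj_conj, ← inv_eq_conj hz,
    show 1 - a * z⁻¹ = -z⁻¹ * (a - z) by field_simp; ring,
    show conj a - z⁻¹ = -z⁻¹ * (1 - conj a * z) by field_simp; ring]
  exact mul_div_mul_left _ _ (neg_ne_zero.mpr (inv_ne_zero hz0))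

theorem transferCoef_conj_symm_general (lam : ℂ) (n l : ℤ) :
    transferCoef lam (-n) (-l) = (starRingEnd ℂ) (transferCoef lam n l) := by
  have conj_prefactor : conj (1 / (2 * Real.pi * I)) = -(1 / (2 * Real.pi * I)) := by
    simp [map_ofNat]
  rw [transferCoef, transferCoef, map_mul, conj_prefactor, conj_circleIntegral, neg_mul_neg]
  congr 1
  refine circleIntegral.integral_congr zero_le_one fun z hz => ?_
  rw [mem_sphere_zero_iff_norm] at hz
  have hz0 : z ≠ 0 := by rintro rfl; simp at hz
  rw [map_mul, map_zpow₀, map_zpow₀, conj_one_sub_conj_mul_div_sub_eq_inv lam hz,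
    ← inv_eq_conj hz, inv_zpow', inv_zpow', ofReal_one, one_pow, sub_zero, ← mul_assoc, one_div,
    ← zpow_natCast, ← zpow_neg, ← zpow_add₀ hz0]
  congr 2
  ring

/-- For λ ∈ ℂ with |λ| < 1 and all integers n, l, the matrix coefficients satisfy
L(−n, −l) = conj(L(n, l)). -/
theorem transferCoef_conj_symm (lam : ℂ) (hlam : ‖lam‖ < 1) (n l : ℤ) :
    transferCoef lam (-n) (-l) = (starRingEnd ℂ) (transferCoef lam n l) :=
  transferCoef_conj_symm_general lam n l
end

section
/- For every λ ∈ ℂ with |λ| < 1, every natural number n and every integer l with l < n, the matrix coefficients satisfy L(−n, −l) = 0 and L(n, l) = 0. In particular, for l < n the integrand z^{n−l−1}·((λ − z)/(1 − conj(λ)·z))^n is holomorphic on a neighbourhood of the closed unit disc and its circle integral over the unit circle vanishes. -/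
open Complex Metric Real

section CircleInversion

variable {E : Type*} [NormedAddCommGroup E] [NormedSpace ℂ E]

theorem circleIntegral_inv_smul_eq_circleAverage (f : ℂ → E) :
    (∮ z in C(0, 1), z⁻¹ • f z) = (2 * π * I) • circleAverage f 0 1 := by
  rw [circleAverage_eq_circleIntegral one_ne_zero, smul_inv_smul₀ two_pi_I_ne_zero]
  simp only [sub_zero]

theorem circleIntegral_eq_circleIntegral_inv (g : ℂ → E) :
    (∮ z in C(0, 1), g z) = ∮ z in C(0, 1), z⁻¹ ^ 2 • g z⁻¹ := by
  have hg : (∮ z in C(0, 1), g z) = ∮ z in C(0, 1), z⁻¹ • z • g z :=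
    circleIntegral.integral_congr zero_le_one fun z hz ↦
      (inv_smul_smul₀ (ne_zero_of_mem_sphere one_ne_zero ⟨z, hz⟩) (g z)).symm
  have hinv : circleAverage (fun z ↦ z • g z) 0 1 = circleAverage (fun z ↦ z⁻¹ • g z⁻¹) 0 1 := by
    simpa only [inv_inv] using circleAverage_zero_one_congr_inv (f := fun z ↦ z⁻¹ • g z⁻¹)
  rw [hg, circleIntegral_inv_smul_eq_circleAverage, hinv,
    ← circleIntegral_inv_smul_eq_circleAverage]
  simp only [sq, mul_smul]

end CircleInversion

theorem one_sub_mul_ne_zero_of_norm_mul_lt_one {a z : ℂ} (h : ‖a‖ * ‖z‖ < 1) :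
    1 - a * z ≠ 0 := by
  intro h0
  rw [← norm_mul, ← sub_eq_zero.mp h0, norm_one] at h
  exact lt_irrefl 1 h

theorem isOpen_setOf_norm_mul_lt_one (a : ℂ) : IsOpen {z : ℂ | ‖a‖ * ‖z‖ < 1} :=
  isOpen_lt (by fun_prop) continuous_const

theorem closedBall_subset_setOf_norm_mul_lt_one {a : ℂ} (ha : ‖a‖ < 1) :
    closedBall (0 : ℂ) 1 ⊆ {z : ℂ | ‖a‖ * ‖z‖ < 1} := fun z hz ↦ by
  rw [mem_closedBall, dist_zero_right] at hz
  exact (mul_le_of_le_one_right (norm_nonneg a) hz).trans_lt ha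

theorem differentiableOn_zpow_mul_blaschke_pow (μ : ℂ) {m : ℤ} (hm : 0 ≤ m) (n : ℕ) :
    DifferentiableOn ℂ (fun z : ℂ ↦ z ^ m * ((μ - z) / (1 - (starRingEnd ℂ) μ * z)) ^ (n : ℤ))
      {z : ℂ | ‖μ‖ * ‖z‖ < 1} := fun z hz ↦ by
  have hden : 1 - (starRingEnd ℂ) μ * z ≠ 0 :=
    one_sub_mul_ne_zero_of_norm_mul_lt_one (by rwa [norm_conj])
  simp only [zpow_natCast]
  exact ((differentiableAt_zpow.mpr (Or.inr hm)).mul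
    (((differentiableAt_const μ).sub differentiableAt_id).div
      ((differentiableAt_const 1).sub ((differentiableAt_const _).mul differentiableAt_id))
      hden |>.pow n)).differentiableWithinAt

theorem circleIntegral_zpow_mul_blaschke_pow_eq_zero {μ : ℂ} (hμ : ‖μ‖ < 1) {m : ℤ}
    (hm : 0 ≤ m) (n : ℕ) :
    (∮ z in C(0, 1), z ^ m * ((μ - z) / (1 - (starRingEnd ℂ) μ * z)) ^ (n : ℤ)) = 0 := by
  have hV := isOpen_setOf_norm_mul_lt_one μ
  have hball := closedBall_subset_setOf_norm_mul_lt_one hμ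
  have hf := differentiableOn_zpow_mul_blaschke_pow μ hm n
  exact circleIntegral_eq_zero_of_differentiable_on_off_countable zero_le_one
    Set.countable_empty (hf.continuousOn.mono hball)
    fun z hz ↦ hf.differentiableAt (hV.mem_nhds (hball (ball_subset_closedBall hz.1)))

theorem one_sub_mul_inv_div_sub_inv {a b z : ℂ} (hz : z ≠ 0) :
    (1 - a * z⁻¹) / (b - z⁻¹) = (a - z) / (1 - b * z) := by
  have hnum : 1 - a * z⁻¹ = (z - a) / z := by field_simp
  have hden : b - z⁻¹ = (b * z - 1) / z := by field_simp
  rw [hnum, hden, div_div_div_cancel_right₀ hz, ← neg_div_neg_eq, neg_sub, neg_sub]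

theorem transferCoef_neg_neg (lam : ℂ) (n l : ℤ) :
    transferCoef lam (-n) (-l) = (1 / (2 * π * I)) *
      ∮ z in C(0, 1), z ^ (n - l - 1) * ((lam - z) / (1 - (starRingEnd ℂ) lam * z)) ^ n := by
  simp only [transferCoef, neg_sub_neg, zpow_neg, ← inv_zpow, inv_div]

theorem transferCoef_eq_circleIntegral_conj (lam : ℂ) (n l : ℤ) :
    transferCoef lam n l = (1 / (2 * π * I)) *
      ∮ z in C(0, 1), z ^ (n - l - 1) *
        (((starRingEnd ℂ) lam - z) / (1 - (starRingEnd ℂ) ((starRingEnd ℂ) lam) * z)) ^ n := by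
  rw [transferCoef, circleIntegral_eq_circleIntegral_inv]
  congr 1
  refine circleIntegral.integral_congr zero_le_one fun z hz ↦ ?_
  have hz0 : z ≠ 0 := ne_zero_of_mem_sphere one_ne_zero ⟨z, hz⟩
  rw [conj_conj, one_sub_mul_inv_div_sub_inv hz0, smul_eq_mul, ← mul_assoc, ← zpow_natCast,
    ← zpow_add₀ (inv_ne_zero hz0), inv_zpow']
  congr 2
  push_cast
  ring

/-- For λ ∈ ℂ with |λ| < 1, a natural number n and an integer l < n, the matrix
coefficients satisfy L(−n, −l) = 0 and L(n, l) = 0; in particular the integrand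
z^{n−l−1}·((λ − z)/(1 − conj(λ)z))ⁿ is holomorphic on a neighbourhood of the closed unit
disc and its circle integral over the unit circle vanishes. -/
theorem transferCoef_triangular (lam : ℂ) (hlam : ‖lam‖ < 1)
    (n : ℕ) (l : ℤ) (hl : l < (n : ℤ)) :
    transferCoef lam (-(n : ℤ)) (-l) = 0 ∧
    transferCoef lam (n : ℤ) l = 0 ∧
    (∃ V : Set ℂ, IsOpen V ∧ Metric.closedBall (0 : ℂ) 1 ⊆ V ∧
      DifferentiableOn ℂ
        (fun z : ℂ => z ^ ((n : ℤ) - l - 1) * ((lam - z) / (1 - (starRingEnd ℂ) lam * z)) ^ (n : ℤ))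
        V) ∧
    (∮ z in C(0, 1),
        z ^ ((n : ℤ) - l - 1) * ((lam - z) / (1 - (starRingEnd ℂ) lam * z)) ^ (n : ℤ)) = 0 := by
  have hm : 0 ≤ (n : ℤ) - l - 1 := by omega
  have hvanish := circleIntegral_zpow_mul_blaschke_pow_eq_zero hlam hm n
  have hvanish_conj := circleIntegral_zpow_mul_blaschke_pow_eq_zero
    (μ := (starRingEnd ℂ) lam) (by rwa [norm_conj]) hm n
  refine ⟨?_, ?_, ⟨_, isOpen_setOf_norm_mul_lt_one lam,
    closedBall_subset_setOf_norm_mul_lt_one hlam, differentiableOn_zpow_mul_blaschke_pow lam hm n⟩,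
    hvanish⟩
  · rw [transferCoef_neg_neg, hvanish, mul_zero]
  · rw [transferCoef_eq_circleIntegral_conj, hvanish_conj, mul_zero]
end

section
/- Let λ ∈ ℂ with |λ| < 1 and let N be a natural number. Define the (2N+1) × (2N+1) complex matrix M indexed by i, j ∈ {0, 1, …, 2N} via M(i, j) = L(i − N, j − N) (so the rows and columns are labelled by the integers −N, …, N). Then the characteristic polynomial of M equals ∏_{n=0}^{N} (X − λ^n) · ∏_{n=1}^{N} (X − conj(λ)^n). In particular the eigenvalues of M, with multiplicity, are λ^0 = 1, λ, …, λ^N together with conj(λ), …, conj(λ)^N. -/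
open Complex ComplexConjugate Metric Polynomial

theorem Matrix.BlockTriangular.charpoly_eq_prod_diag {n α : Type*} [Fintype n] [DecidableEq n]
    [LinearOrder α] {R : Type*} [CommRing R] {M : Matrix n n R} {b : n → α}
    (h : M.BlockTriangular b) (hb : Function.Injective b) :
    M.charpoly = ∏ i, (X - C (M i i)) := by
  rw [h.charpoly, Finset.prod_image hb.injOn]
  refine Finset.prod_congr rfl fun i _ => ?_
  let : Unique {j // b j = b i} := ⟨⟨⟨i, rfl⟩⟩, fun j => Subtype.ext (hb j.2)⟩
  simp only [Matrix.charpoly, Matrix.det_unique, Matrix.charmatrix_apply_eq,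
    Matrix.toSquareBlock_def]
  rfl

theorem circleIntegral_zpow_mul_of_differentiableOn {R : ℝ} (hR : 0 < R) {f : ℂ → ℂ}
    (hf : DifferentiableOn ℂ f (closedBall 0 R)) {k : ℤ} (hk : -1 ≤ k) :
    (∮ z in C(0, R), z ^ k * f z) = if k = -1 then 2 * Real.pi * I * f 0 else 0 := by
  split_ifs with h
  · subst h
    simpa [zpow_neg_one, smul_eq_mul] using hf.circleIntegral_sub_inv_smul (w := 0) (by simpa)
  · lift k to ℕ using by omega
    simp only [zpow_natCast]
    exact ((differentiableOn_pow k).mul hf).diffContOnCl_ball subset_rfl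
      |>.circleIntegral_eq_zero hR.le

theorem circleIntegral_comp_inv (f : ℂ → ℂ) :
    (∮ z in C(0, 1), f z) = ∮ z in C(0, 1), (z ^ 2)⁻¹ * f z⁻¹ := by
  set g := fun θ : ℝ => circleMap 0 1 θ * I * f (circleMap 0 1 θ)
  have hinv (θ : ℝ) : circleMap 0 1 (-θ) = (circleMap 0 1 θ)⁻¹ := by
    simp [circleMap, Complex.exp_neg]
  have hrhs : (fun θ : ℝ =>
      circleMap 0 1 θ * I * ((circleMap 0 1 θ ^ 2)⁻¹ * f (circleMap 0 1 θ)⁻¹)) =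
        fun θ => g (-θ) := by
    funext θ
    have : circleMap 0 1 θ ≠ 0 := circleMap_ne_center one_ne_zero
    simp only [g, hinv]
    field_simp
  -- `θ ↦ -θ` parametrises `z ↦ z⁻¹`; periodicity moves `[-2π, 0]` back to `[0, 2π]`.
  have hg : Function.Periodic g (2 * Real.pi) := fun θ => by simp [g, periodic_circleMap 0 1 θ]
  simp only [circleIntegral, deriv_circleMap, smul_eq_mul, hrhs, intervalIntegral.integral_comp_neg]
  simpa using hg.intervalIntegral_add_eq 0 (-(2 * Real.pi))

noncomputable def blaschke (a z : ℂ) : ℂ := (a - z) / (1 - conj a * z)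

@[simp] lemma blaschke_zero_right (a : ℂ) : blaschke a 0 = a := by simp [blaschke]

lemma differentiableOn_blaschke {a : ℂ} (ha : ‖a‖ < 1) :
    DifferentiableOn ℂ (blaschke a) (closedBall 0 1) := by
  refine fun z hz => (DifferentiableAt.div (by fun_prop) (by fun_prop) ?_).differentiableWithinAt
  rw [mem_closedBall_zero_iff] at hz
  intro h
  have : ‖conj a * z‖ < 1 := by
    rw [norm_mul, norm_conj]
    nlinarith [norm_nonneg a, norm_nonneg z]
  rw [sub_eq_zero.mp h |>.symm, norm_one] at this
  exact lt_irrefl _ this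

lemma circleIntegral_zpow_mul_blaschke_pow {a : ℂ} (ha : ‖a‖ < 1) (m : ℕ) {k : ℤ} (hk : -1 ≤ k) :
    (1 / (2 * Real.pi * I)) * (∮ z in C(0, 1), z ^ k * blaschke a z ^ m) =
      if k = -1 then a ^ m else 0 := by
  rw [circleIntegral_zpow_mul_of_differentiableOn (f := fun z => blaschke a z ^ m) one_pos
    ((differentiableOn_blaschke ha).pow m) hk]
  split_ifs
  · field_simp [Real.pi_ne_zero, I_ne_zero]
    simp
  · simp

lemma transferCoef_of_nonpos {lam : ℂ} (hlam : ‖lam‖ < 1) {n l : ℤ} (hn : n ≤ 0) (hnl : n ≤ l) :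
    transferCoef lam n l = if l = n then lam ^ n.natAbs else 0 := by
  have hintegrand (z : ℂ) : z ^ (l - n - 1) * ((1 - conj lam * z) / (lam - z)) ^ n =
      z ^ (l - n - 1) * blaschke lam z ^ n.natAbs := by
    rw [blaschke, ← inv_div, inv_zpow', ← zpow_natCast, Int.ofNat_natAbs_of_nonpos hn]
  simp only [transferCoef, hintegrand]
  rw [circleIntegral_zpow_mul_blaschke_pow hlam _ (by omega)]
  exact if_congr (by omega) rfl rfl

lemma transferCoef_of_nonneg {lam : ℂ} (hlam : ‖lam‖ < 1) {n l : ℤ} (hn : 0 ≤ n) (hln : l ≤ n) :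
    transferCoef lam n l = if l = n then conj lam ^ n.natAbs else 0 := by
  rw [transferCoef, circleIntegral_comp_inv]
  have hintegrand : Set.EqOn
      (fun z => (z ^ 2)⁻¹ * (z⁻¹ ^ (l - n - 1) * ((1 - conj lam * z⁻¹) / (lam - z⁻¹)) ^ n))
      (fun z => z ^ (n - l - 1) * blaschke (conj lam) z ^ n.natAbs) (sphere 0 1) := by
    intro z hz
    have hz0 : z ≠ 0 := by rintro rfl; simp at hz
    have hbl : (1 - conj lam * z⁻¹) / (lam - z⁻¹) = blaschke (conj lam) z := by
      rw [blaschke, Complex.conj_conj, ← mul_div_mul_right _ _ hz0, ← neg_div_neg_eq]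
      congr 1 <;> field_simp <;> ring
    simp only
    rw [hbl, ← zpow_natCast (blaschke _ z), Int.natAbs_of_nonneg hn, inv_zpow', ← zpow_natCast z 2,
      ← zpow_neg, ← mul_assoc, ← zpow_add₀ hz0]
    congr 2
    push_cast; ring
  rw [circleIntegral.integral_congr zero_le_one hintegrand,
    circleIntegral_zpow_mul_blaschke_pow (by rwa [norm_conj]) _ (by omega)]
  exact if_congr (by omega) rfl rfl

lemma Equiv.intEquivNat_apply (n : ℤ) :
    Equiv.intEquivNat n = if 0 ≤ n then 2 * n.toNat else 2 * (-n - 1).toNat + 1 := by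
  rcases n with n | n
  · rfl
  · rw [if_neg (Int.negSucc_lt_zero n).not_ge, Int.negSucc_eq]
    change 2 * n + 1 = _
    omega

lemma transferCoef_eq_zero_of_intEquivNat_lt {lam : ℂ} (hlam : ‖lam‖ < 1) {n l : ℤ}
    (h : Equiv.intEquivNat l < Equiv.intEquivNat n) : transferCoef lam n l = 0 := by
  have hcases : n < 0 ∧ n < l ∨ 0 ≤ n ∧ l < n := by
    rw [Equiv.intEquivNat_apply, Equiv.intEquivNat_apply] at h
    split_ifs at h <;> omega
  rcases hcases with ⟨hn, hnl⟩ | ⟨hn, hln⟩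
  · rw [transferCoef_of_nonpos hlam hn.le hnl.le, if_neg hnl.ne']
  · rw [transferCoef_of_nonneg hlam hn hln.le, if_neg hln.ne]

lemma transferCoef_self {lam : ℂ} (hlam : ‖lam‖ < 1) (n : ℤ) :
    transferCoef lam n n = if n ≤ 0 then lam ^ n.natAbs else conj lam ^ n.natAbs := by
  split_ifs with hn
  · rw [transferCoef_of_nonpos hlam hn le_rfl, if_pos rfl]
  · rw [transferCoef_of_nonneg hlam (by omega) le_rfl, if_pos rfl]

theorem Fin.prod_univ_sub_eq_prod_range_neg_mul_prod_Icc {M : Type*} [CommMonoid M] (N : ℕ)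
    (g : ℤ → M) :
    ∏ i : Fin (2 * N + 1), g (i - N) =
      (∏ n ∈ Finset.range (N + 1), g (-n)) * ∏ n ∈ Finset.Icc 1 N, g n := by
  rw [Fin.prod_univ_eq_prod_range (fun i => g (i - N)), show 2 * N + 1 = N + 1 + N by ring,
    Finset.prod_range_add, ← Finset.prod_range_reflect]
  congr 1
  · refine Finset.prod_congr rfl fun i hi => ?_
    rw [Finset.mem_range] at hi
    congr 1
    omega
  · rw [← Finset.Ico_add_one_right_eq_Icc, Finset.prod_Ico_eq_prod_range]
    refine Finset.prod_congr rfl fun i _ => ?_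
    congr 1
    omega

/-- For λ ∈ ℂ with |λ| < 1 and a natural number N, the (2N+1)×(2N+1) truncation M of the
transfer-operator matrix, with rows and columns indexed by the integers −N, …, N via
M(i,j) = L(i − N, j − N), has characteristic polynomial
∏_{n=0}^{N} (X − λⁿ) · ∏_{n=1}^{N} (X − conj(λ)ⁿ); in particular its eigenvalues with
multiplicity are 1, λ, …, λᴺ together with conj(λ), …, conj(λ)ᴺ. -/
theorem truncation_charpoly (lam : ℂ) (hlam : ‖lam‖ < 1) (N : ℕ)
    (M : Matrix (Fin (2 * N + 1)) (Fin (2 * N + 1)) ℂ)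
    (hM : ∀ i j : Fin (2 * N + 1), M i j = transferCoef lam ((i : ℤ) - N) ((j : ℤ) - N)) :
    M.charpoly =
      (∏ n ∈ Finset.range (N + 1), (Polynomial.X - Polynomial.C (lam ^ n))) *
        ∏ n ∈ Finset.Icc 1 N, (Polynomial.X - Polynomial.C ((starRingEnd ℂ) lam ^ n)) := by
  set b : Fin (2 * N + 1) → ℕ := fun i => Equiv.intEquivNat ((i : ℤ) - N)
  have hb : Function.Injective b := fun i j h => by
    have := Equiv.intEquivNat.injective h
    omega
  have htri : M.BlockTriangular b := fun i j h => by
    rw [hM]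
    exact transferCoef_eq_zero_of_intEquivNat_lt hlam h
  rw [htri.charpoly_eq_prod_diag hb]
  simp only [hM, transferCoef_self hlam]
  rw [Fin.prod_univ_sub_eq_prod_range_neg_mul_prod_Icc N
    fun n => X - C (if n ≤ 0 then lam ^ n.natAbs else conj lam ^ n.natAbs)]
  congr 1
  · refine Finset.prod_congr rfl fun n _ => ?_
    simp
  · refine Finset.prod_congr rfl fun n hn => ?_
    rw [Finset.mem_Icc] at hn
    rw [if_neg (by omega), Int.natAbs_natCast]
end
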